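/- Let Γ be a finitely generated countable group acting nonsingularly and ergodically on a nonatomic standard probability space (X, 𝔅, μ), and let G be a locally compact second countable group. If there exists a bounded ergodic G-valued cocycle of the Γ-action, then G is compactly generated. -/

import Mathlib

open MeasureTheory Measure Set Filter Topology

/-- Amenability of a discrete group: existence of a left-invariant mean on `ℓ^∞(Γ)`,
realized as bounded (continuous, w.r.t. the discrete topology) real functions. -/
def IsAmenable (Γ : Type*) [Group Γ] : Prop :=
  letI : TopologicalSpace Γ := ⊥
  haveI : DiscreteTopology Γ := ⟨rfl⟩
  ∃ m : BoundedContinuousFunction Γ ℝ →ₗ[ℝ] ℝ,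
    (∀ f : BoundedContinuousFunction Γ ℝ, (∀ γ : Γ, 0 ≤ f γ) → 0 ≤ m f) ∧
    m (BoundedContinuousFunction.const Γ (1 : ℝ)) = 1 ∧
    ∀ (g : Γ) (f : BoundedContinuousFunction Γ ℝ),
      m (f.compContinuous ⟨fun x => g * x, continuous_of_discreteTopology⟩) = m f

/-- A nonsingular action: each group element acts measurably and quasi-preserves `μ`. -/
def IsNonsingularAction (Γ : Type*) [Group Γ] (X : Type*) [MeasurableSpace X]
    [MulAction Γ X] (μ : Measure X) : Prop :=
  ∀ γ : Γ, Measurable (fun x : X => γ • x) ∧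
    μ.map (fun x : X => γ • x) ≪ μ ∧ μ ≪ μ.map (fun x : X => γ • x)

/-- Ergodicity: every invariant measurable set is null or conull. -/
def IsErgodicAction (Γ : Type*) [Group Γ] (X : Type*) [MeasurableSpace X]
    [MulAction Γ X] (μ : Measure X) : Prop :=
  ∀ A : Set X, MeasurableSet A → (∀ γ : Γ, (fun x : X => γ • x) ⁻¹' A = A) →
    μ A = 0 ∨ μ Aᶜ = 0

/-- Freeness: every nontrivial group element moves a.e. point. -/
def IsFreeAction (Γ : Type*) [Group Γ] (X : Type*) [MeasurableSpace X]
    [MulAction Γ X] (μ : Measure X) : Prop :=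
  ∀ γ : Γ, γ ≠ 1 → ∀ᵐ x ∂μ, γ • x ≠ x

/-- A `G`-valued cocycle of the action. -/
def IsCocycle {Γ : Type*} [Group Γ] {X : Type*} [MeasurableSpace X] [MulAction Γ X]
    {G : Type*} [Group G] [MeasurableSpace G] (μ : Measure X) (c : Γ → X → G) : Prop :=
  (∀ γ : Γ, Measurable (c γ)) ∧
    ∀ γ₁ γ₂ : Γ, ∀ᵐ x ∂μ, c (γ₁ * γ₂) x = c γ₁ (γ₂ • x) * c γ₂ x

/-- An ergodic cocycle: the skew product action on `(X × G, μ × ν)` is ergodic,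
where `ν` is a (left Haar) measure on `G`. -/
def IsErgodicCocycle {Γ : Type*} [Group Γ] {X : Type*} [MeasurableSpace X] [MulAction Γ X]
    {G : Type*} [Group G] [MeasurableSpace G] (μ : Measure X) (ν : Measure G)
    (c : Γ → X → G) : Prop :=
  IsCocycle μ c ∧
    ∀ A : Set (X × G), MeasurableSet A →
      (∀ γ : Γ, (fun p : X × G => (γ • p.1, c γ p.1 * p.2)) ⁻¹' A = A) →
      (μ.prod ν) A = 0 ∨ (μ.prod ν) Aᶜ = 0

/-- The conjugacy class of `g`. -/
def conjClass {G : Type*} [Group G] (g : G) : Set G := {h | ∃ k : G, k * g * k⁻¹ = h}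

/-- An [FC]⁻-group: all conjugacy classes are relatively compact. -/
def IsFCbarGroup (G : Type*) [Group G] [TopologicalSpace G] : Prop :=
  ∀ g : G, IsCompact (closure (conjClass g))

/-- A [SIN]-group: there is a fundamental system of conjugation-invariant
neighborhoods of the identity. -/
def IsSINGroup (G : Type*) [Group G] [TopologicalSpace G] : Prop :=
  ∀ U ∈ nhds (1 : G), ∃ V ∈ nhds (1 : G), V ⊆ U ∧ ∀ k : G, (fun h => k * h * k⁻¹) '' V = V

/-- `H• := ⋃_{g ∈ G} g H g⁻¹`, the conjugation saturation of `H`. -/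
def conjSaturation {G : Type*} [Group G] (H : Set G) : Set G :=
  ⋃ g : G, (fun h => g * h * g⁻¹) '' H

/-!
Let `K` be the union of a compact identity neighbourhood and of compact sets containing
a.e. the values of `c` on a finite generating set of `Γ`; the subgroup `H` generated by `K`
is open. The cocycle identity and nonsingularity propagate "`c γ` takes values in `H` a.e."
from the generators to all of `Γ`, so `X × H` is, up to a null set, invariant under the skew
product. Since `H` is open it has positive Haar measure, so ergodicity makes `X × H` conull;
an open subgroup with null complement is all of `G`.
-/

def invariantCore (Γ : Type*) [Group Γ] {X : Type*} [MulAction Γ X] (Y : Set X) : Set X :=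
  ⋂ δ : Γ, (δ • ·) ⁻¹' Y

section NonsingularAction

variable {Γ : Type*} [Group Γ] {X : Type*} [MulAction Γ X]

theorem invariantCore_subset (Y : Set X) : invariantCore Γ Y ⊆ Y := fun x hx => by
  simpa using mem_iInter.1 hx 1

theorem preimage_smul_invariantCore (Y : Set X) (γ : Γ) :
    (γ • ·) ⁻¹' invariantCore Γ Y = invariantCore Γ Y := by
  ext x
  simp only [invariantCore, mem_preimage, mem_iInter, smul_smul]
  exact ⟨fun h δ => by simpa using h (δ * γ⁻¹), fun h δ => h (δ * γ)⟩

variable [MeasurableSpace X] {μ : Measure X}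

theorem IsNonsingularAction.quasiMeasurePreserving_smul (hns : IsNonsingularAction Γ X μ)
    (γ : Γ) : QuasiMeasurePreserving (γ • · : X → X) μ μ :=
  ⟨(hns γ).1, (hns γ).2.1⟩

theorem IsNonsingularAction.measurableSet_invariantCore [Countable Γ]
    (hns : IsNonsingularAction Γ X μ) {Y : Set X} (hY : MeasurableSet Y) :
    MeasurableSet (invariantCore Γ Y) :=
  .iInter fun δ => (hns δ).1 hY

theorem IsNonsingularAction.ae_mem_invariantCore [Countable Γ]
    (hns : IsNonsingularAction Γ X μ) {Y : Set X} (hY : ∀ᵐ x ∂μ, x ∈ Y) :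
    ∀ᵐ x ∂μ, x ∈ invariantCore Γ Y := by
  simpa only [invariantCore, mem_iInter, mem_preimage, ae_all_iff] using
    fun δ => (hns.quasiMeasurePreserving_smul δ).ae hY

end NonsingularAction

section Cocycle

variable {Γ : Type*} [Group Γ] {X : Type*} [MulAction Γ X] {G : Type*} [Group G]
  {c : Γ → X → G}

theorem preimage_skewProduct_prod {Y : Set X} (hY : ∀ γ : Γ, (γ • ·) ⁻¹' Y = Y)
    {H : Subgroup G} (hcY : ∀ x ∈ Y, ∀ γ, c γ x ∈ H) (γ : Γ) :
    (fun p : X × G => (γ • p.1, c γ p.1 * p.2)) ⁻¹' (Y ×ˢ (H : Set G)) = Y ×ˢ H := by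
  ext ⟨x, g⟩
  simp only [mem_preimage, mem_prod, SetLike.mem_coe]
  rw [← mem_preimage (f := (γ • ·)), hY]
  exact and_congr_right fun hx => H.mul_mem_cancel_left (hcY x hx γ)

variable [MeasurableSpace X] [MeasurableSpace G] {μ : Measure X}

theorem IsCocycle.ae_apply_one (hc : IsCocycle μ c) : ∀ᵐ x ∂μ, c 1 x = 1 := by
  filter_upwards [hc.2 1 1] with x hx
  simpa using hx

theorem IsCocycle.ae_apply_inv (hc : IsCocycle μ c) (γ : Γ) :
    ∀ᵐ x ∂μ, c γ⁻¹ x = (c γ (γ⁻¹ • x))⁻¹ := by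
  filter_upwards [hc.2 γ γ⁻¹, hc.ae_apply_one] with x hx hone
  rw [mul_inv_cancel, hone] at hx
  exact eq_inv_of_mul_eq_one_right hx.symm

def IsCocycle.aeMemSubgroup (hc : IsCocycle μ c) (hns : IsNonsingularAction Γ X μ)
    (H : Subgroup G) : Subgroup Γ where
  carrier := {γ | ∀ᵐ x ∂μ, c γ x ∈ H}
  one_mem' := by
    filter_upwards [hc.ae_apply_one] with x hx
    simp [hx]
  mul_mem' {γ₁ γ₂} h₁ h₂ := by
    change ∀ᵐ x ∂μ, c (γ₁ * γ₂) x ∈ H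
    filter_upwards [hc.2 γ₁ γ₂, (hns.quasiMeasurePreserving_smul γ₂).ae h₁, h₂]
      with x hx hx₁ hx₂
    exact hx ▸ H.mul_mem hx₁ hx₂
  inv_mem' {γ} h := by
    filter_upwards [hc.ae_apply_inv γ, (hns.quasiMeasurePreserving_smul γ⁻¹).ae h]
      with x hx hx'
    exact hx ▸ H.inv_mem hx'

theorem IsCocycle.ae_mem_of_closure_eq_top (hc : IsCocycle μ c)
    (hns : IsNonsingularAction Γ X μ) {H : Subgroup G} {S : Set Γ}
    (hS : Subgroup.closure S = ⊤) (hSH : ∀ s ∈ S, ∀ᵐ x ∂μ, c s x ∈ H) (γ : Γ) :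
    ∀ᵐ x ∂μ, c γ x ∈ H :=
  (Subgroup.closure_le (hc.aeMemSubgroup hns H)).2 hSH (hS ▸ Subgroup.mem_top γ)

end Cocycle

theorem Subgroup.eq_top_of_isOpen_of_measure_compl_eq_zero {G : Type*} [Group G]
    [TopologicalSpace G] [IsTopologicalGroup G] [MeasurableSpace G] {ν : Measure G}
    [ν.IsOpenPosMeasure] {H : Subgroup G} (hH : IsOpen (H : Set G))
    (hHc : ν (H : Set G)ᶜ = 0) : H = ⊤ := by
  refine (Subgroup.eq_top_iff' H).2 fun g => by_contra fun hg => ?_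
  exact (H.isClosed_of_isOpen hH).isOpen_compl.measure_ne_zero ν ⟨g, hg⟩ hHc

theorem IsErgodicCocycle.eq_top_of_ae_mem {Γ : Type*} [Group Γ] [Countable Γ]
    {X : Type*} [MeasurableSpace X] [MulAction Γ X] {μ : Measure X} [NeZero μ]
    {G : Type*} [Group G] [TopologicalSpace G] [IsTopologicalGroup G] [MeasurableSpace G]
    [OpensMeasurableSpace G] {ν : Measure G} [SFinite ν] [ν.IsOpenPosMeasure]
    {c : Γ → X → G} (hc : IsErgodicCocycle μ ν c) (hns : IsNonsingularAction Γ X μ)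
    {H : Subgroup G} (hH : IsOpen (H : Set G)) (hcH : ∀ γ, ∀ᵐ x ∂μ, c γ x ∈ H) :
    H = ⊤ := by
  set Y := ⋂ γ, c γ ⁻¹' (H : Set G)
  have hYae : ∀ᵐ x ∂μ, x ∈ Y := by
    simpa only [Y, mem_iInter, mem_preimage, SetLike.mem_coe, ae_all_iff] using hcH
  set X₀ := invariantCore Γ Y
  have hX₀meas : MeasurableSet X₀ :=
    hns.measurableSet_invariantCore (.iInter fun γ => hc.1.1 γ hH.measurableSet)
  have hX₀ : μ X₀ ≠ 0 := by
    rw [measure_congr (ae_eq_univ.2 (ae_iff.1 (hns.ae_mem_invariantCore hYae)))]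
    exact measure_univ_ne_zero.2 (NeZero.ne μ)
  have hcX₀ : ∀ x ∈ X₀, ∀ γ, c γ x ∈ H := fun x hx =>
    mem_iInter.1 (invariantCore_subset Y hx)
  have hHν : ν H ≠ 0 := hH.measure_ne_zero ν ⟨1, H.one_mem⟩
  rcases hc.2 (X₀ ×ˢ H) (hX₀meas.prod hH.measurableSet)
      (preimage_skewProduct_prod (preimage_smul_invariantCore Y) hcX₀) with hnull | hconull
  · rw [Measure.prod_prod] at hnull
    exact absurd hnull (mul_ne_zero hX₀ hHν)
  · have hsub : X₀ ×ˢ (H : Set G)ᶜ ⊆ (X₀ ×ˢ (H : Set G))ᶜ :=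
      fun p hp hp' => hp.2 hp'.2
    have hprod := measure_mono_null hsub hconull
    rw [Measure.prod_prod, mul_eq_zero] at hprod
    exact Subgroup.eq_top_of_isOpen_of_measure_compl_eq_zero hH (hprod.resolve_left hX₀)

theorem compactly_generated_of_bounded_ergodic_cocycle_general
    {Γ : Type*} [Group Γ] [Countable Γ] (hfg : Group.FG Γ)
    {X : Type*} [MeasurableSpace X] [MulAction Γ X]
    (μ : Measure X) [IsProbabilityMeasure μ]
    (hns : IsNonsingularAction Γ X μ)
    {G : Type*} [Group G] [TopologicalSpace G] [IsTopologicalGroup G]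
    [LocallyCompactSpace G] [SecondCountableTopology G]
    [MeasurableSpace G] [BorelSpace G]
    (ν : Measure G) [ν.IsHaarMeasure]
    (hex : ∃ c : Γ → X → G, IsErgodicCocycle μ ν c ∧
      ∀ γ : Γ, ∃ K : Set G, IsCompact K ∧ ∀ᵐ x ∂μ, c γ x ∈ K) :
    ∃ K : Set G, IsCompact K ∧ Subgroup.closure K = ⊤ := by
  obtain ⟨c, hc, hbdd⟩ := hex
  choose L hLc hcL using hbdd
  obtain ⟨S, hS, hSfin⟩ := Group.fg_iff.mp hfg
  obtain ⟨U, hUc, hU⟩ := exists_compact_mem_nhds (1 : G)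
  set K := U ∪ ⋃ s ∈ S, L s
  have hH : IsOpen (Subgroup.closure K : Set G) :=
    Subgroup.isOpen_of_mem_nhds _
      (mem_of_superset hU (subset_union_left.trans Subgroup.subset_closure))
  refine ⟨K, hUc.union (hSfin.isCompact_biUnion fun s _ => hLc s),
    hc.eq_top_of_ae_mem hns hH (hc.1.ae_mem_of_closure_eq_top hns hS fun s hs => ?_)⟩
  filter_upwards [hcL s] with x hx
  exact Subgroup.subset_closure (Or.inr (mem_biUnion hs hx))

/-- If a finitely generated countable group acting nonsingularly and
ergodically on a nonatomic standard probability space admits a bounded ergodic `G`-valued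
cocycle, then `G` is compactly generated. -/
theorem compactly_generated_of_bounded_ergodic_cocycle
    {Γ : Type*} [Group Γ] [Countable Γ] (hfg : Group.FG Γ)
    {X : Type*} [MeasurableSpace X] [StandardBorelSpace X] [MulAction Γ X]
    (μ : Measure X) [IsProbabilityMeasure μ] [NullSingletonClass μ]
    (hns : IsNonsingularAction Γ X μ)
    (herg : IsErgodicAction Γ X μ)
    {G : Type*} [Group G] [TopologicalSpace G] [IsTopologicalGroup G]
    [LocallyCompactSpace G] [SecondCountableTopology G]
    [MeasurableSpace G] [BorelSpace G]
    (ν : Measure G) [ν.IsHaarMeasure]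
    (hex : ∃ c : Γ → X → G, IsErgodicCocycle μ ν c ∧
      ∀ γ : Γ, ∃ K : Set G, IsCompact K ∧ ∀ᵐ x ∂μ, c γ x ∈ K) :
    ∃ K : Set G, IsCompact K ∧ Subgroup.closure K = ⊤ :=
  compactly_generated_of_bounded_ergodic_cocycle_general hfg μ hns ν hex
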